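/- Let G=(V,A) be a directed graph with nonnegative arc weights, let c be a customer vertex, and let f1, f2 be two facility vertices with c ∉ {f1,f2}. For a facility f ≠ c, let N(c,f) denote the set of out-neighbors x of c (vertices with (c,x) ∈ A) such that x lies on some shortest path from c to f. Then the pair {f1,f2} covers c in a setwise-disjoint fashion if and only if N(c,f1) ∩ N(c,f2) = ∅. -/

import Mathlib

/-- `IsDiPath A a b p` asserts that the list of vertices `p` is a simple directed
path from `a` to `b` in the directed graph with arc relation `A`. -/
def IsDiPath {V : Type*} (A : V → V → Prop) (a b : V) (p : List V) : Prop :=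
  p.head? = some a ∧ p.getLast? = some b ∧ List.Chain' A p ∧ p.Nodup

/-- The arcs traversed by a path: the list of consecutive pairs of vertices. -/
def pathArcs {V : Type*} (p : List V) : List (V × V) :=
  p.zip p.tail

/-- The total weight of a path: the sum of the weights of its arcs. -/
def pathWeight {V : Type*} (w : V → V → ℝ) (p : List V) : ℝ :=
  ((p.zip p.tail).map fun e => w e.1 e.2).sum

/-- `p` is a shortest (minimum total weight) directed path from `a` to `b`. -/
def IsShortestDiPath {V : Type*} (A : V → V → Prop) (w : V → V → ℝ) (a b : V)
    (p : List V) : Prop :=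
  IsDiPath A a b p ∧ ∀ q, IsDiPath A a b q → pathWeight w p ≤ pathWeight w q

/-- The pair `{f₁, f₂}` covers `c` in a pathwise-disjoint fashion: there are shortest
paths from `c` to `f₁` and from `c` to `f₂` with no common vertex except `c`. -/
def CoversPathwise {V : Type*} (A : V → V → Prop) (w : V → V → ℝ) (c f₁ f₂ : V) : Prop :=
  ∃ p₁ p₂, IsShortestDiPath A w c f₁ p₁ ∧ IsShortestDiPath A w c f₂ p₂ ∧
    ∀ v ∈ p₁, v ∈ p₂ → v = c

/-- The pair `{f₁, f₂}` covers `c` in a setwise-disjoint fashion: no shortest path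
from `c` to `f₁` shares a vertex other than `c` with any shortest path from `c` to `f₂`. -/
def CoversSetwise {V : Type*} (A : V → V → Prop) (w : V → V → ℝ) (c f₁ f₂ : V) : Prop :=
  ∀ p₁ p₂, IsShortestDiPath A w c f₁ p₁ → IsShortestDiPath A w c f₂ p₂ →
    ∀ v ∈ p₁, v ∈ p₂ → v = c

/-- `F'` is a pathwise-disjoint cover for the customers `C` (facilities drawn from `F`). -/
def IsPathwiseCover {V : Type*} (A : V → V → Prop) (w : V → V → ℝ) (C F F' : Set V) : Prop :=
  F' ⊆ F ∧ ∀ c ∈ C, c ∉ F' → ∃ f₁ ∈ F', ∃ f₂ ∈ F', f₁ ≠ f₂ ∧ f₁ ≠ c ∧ f₂ ≠ c ∧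
    CoversPathwise A w c f₁ f₂

/-- `F'` is a setwise-disjoint cover for the customers `C` (facilities drawn from `F`). -/
def IsSetwiseCover {V : Type*} (A : V → V → Prop) (w : V → V → ℝ) (C F F' : Set V) : Prop :=
  F' ⊆ F ∧ ∀ c ∈ C, c ∉ F' → ∃ f₁ ∈ F', ∃ f₂ ∈ F', f₁ ≠ f₂ ∧ f₁ ≠ c ∧ f₂ ≠ c ∧
    CoversSetwise A w c f₁ f₂

/-- `spNbrs A w c f` : the set `N(c,f)` of out-neighbours `x` of `c` that lie on
some shortest path from `c` to `f`. -/
def spNbrs {V : Type*} (A : V → V → Prop) (w : V → V → ℝ) (c f : V) : Set V :=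
  {x | A c x ∧ ∃ p, IsShortestDiPath A w c f p ∧ x ∈ p}

/-!
Suppose shortest paths `p₁` (to `f₁`) and `p₂` (to `f₂`) meet outside `c`. Let `v` be the first
vertex of `p₁` lying on `p₂`, and `u` the first vertex of `p₂` lying on `p₁`; write `dᵢ(x)` for
the weight of `pᵢ` up to `x`. Following `p₁` up to `v` and then `p₂` is a simple path to `f₂`; if
`d₁(v) ≤ d₂(v)` it is a shortest one, and it leaves `c` through the same neighbour as `p₁`.
Symmetrically at `u`. If neither splice works then, as `u` follows `v` on `p₁`, `v` follows `u`
on `p₂` and weights are nonnegative, `d₁(v) > d₂(v) ≥ d₂(u) > d₁(u) ≥ d₁(v)`.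
-/

theorem List.exists_eq_append_cons_of_exists_mem {α : Type*} {P : α → Prop} {l : List α}
    (h : ∃ x ∈ l, P x) : ∃ s x r, l = s ++ x :: r ∧ P x ∧ ∀ y ∈ s, ¬ P y := by
  classical
  obtain ⟨x, hx⟩ := Option.isSome_iff_exists.mp
    (List.find?_isSome.mpr (by simpa using h) : (l.find? fun x => decide (P x)).isSome)
  obtain ⟨hPx, s, r, rfl, hs⟩ := List.find?_eq_some_iff_append.mp hx
  exact ⟨s, x, r, rfl, by simpa using hPx, fun y hy => by simpa using hs y hy⟩

section Paths

variable {V : Type*} {A : V → V → Prop} {w : V → V → ℝ}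

theorem pathWeight_cons_cons (w : V → V → ℝ) (a b : V) (l : List V) :
    pathWeight w (a :: b :: l) = w a b + pathWeight w (b :: l) := rfl

theorem pathWeight_append_cons (w : V → V → ℝ) (xs : List V) (v : V) (ys : List V) :
    pathWeight w (xs ++ v :: ys) = pathWeight w (xs ++ [v]) + pathWeight w (v :: ys) := by
  induction xs with
  | nil => simp [pathWeight]
  | cons x xs ih =>
    cases xs with
    | nil => simp [pathWeight]
    | cons y xs =>
      simp only [List.cons_append, pathWeight_cons_cons] at ih ⊢
      rw [ih, add_assoc]

theorem pathWeight_nonneg (hw : ∀ x y, A x y → 0 ≤ w x y) :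
    ∀ {l : List V}, l.IsChain A → 0 ≤ pathWeight w l
  | [], _ | [_], _ => le_rfl
  | a :: b :: l, h => by
    rw [List.isChain_cons_cons] at h
    rw [pathWeight_cons_cons]
    exact add_nonneg (hw a b h.1) (pathWeight_nonneg hw h.2)

theorem pathWeight_le_of_prefix (hw : ∀ x y, A x y → 0 ≤ w x y) {l₁ l₂ : List V}
    (hch : l₂.IsChain A) (h : l₁ <+: l₂) : pathWeight w l₁ ≤ pathWeight w l₂ := by
  obtain ⟨t, rfl⟩ := h
  rcases l₁.eq_nil_or_concat with rfl | ⟨L, b, rfl⟩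
  · exact pathWeight_nonneg hw hch
  · rw [List.concat_eq_append, List.append_assoc, List.singleton_append,
      pathWeight_append_cons w L b t]
    refine le_add_of_nonneg_right (pathWeight_nonneg hw (hch.infix ⟨L, [], ?_⟩))
    simp

theorem pathWeight_concat_le_of_cons_eq_append (hw : ∀ x y, A x y → 0 ≤ w x y)
    {a r m g : List V} {v u : V} (hch : (a ++ v :: r).IsChain A) (h : v :: r = m ++ u :: g) :
    pathWeight w (a ++ [v]) ≤ pathWeight w (a ++ m ++ [u]) := by
  rw [h, ← List.append_assoc] at hch
  refine pathWeight_le_of_prefix hw (hch.prefix ⟨g, by simp⟩) ?_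
  cases m with
  | nil => cases h; simp
  | cons x m =>
    obtain ⟨rfl, -⟩ := List.cons_eq_cons.mp h
    exact ⟨m ++ [u], by simp⟩

theorem IsDiPath.eq_cons {a b : V} {p : List V} (hp : IsDiPath A a b p) :
    ∃ t, p = a :: t ∧ a ∉ t := by
  obtain ⟨t, rfl⟩ := List.head?_eq_some_iff.mp hp.1
  exact ⟨t, rfl, (List.nodup_cons.mp hp.2.2.2).1⟩

theorem IsDiPath.splice {a b f g v : V} {p q r h : List V} (hp : IsDiPath A a f (p ++ v :: r))
    (hq : IsDiPath A b g (q ++ v :: h)) (hdisj : ∀ x ∈ p, x ∉ v :: h) :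
    IsDiPath A a g (p ++ v :: h) := by
  obtain ⟨hph, -, hpc, hpn⟩ := hp
  obtain ⟨-, hql, hqc, hqn⟩ := hq
  refine ⟨?_, ?_, ?_, ?_⟩
  · rw [← hph, List.head?_append, List.head?_append]
    rfl
  · rwa [List.getLast?_append_cons] at hql ⊢
  · have := (hpc.prefix ⟨r, by simp⟩ : (p ++ [v]).IsChain A).append_overlap
      (hqc.infix ⟨q, [], by simp⟩ : ([v] ++ h).IsChain A) (List.cons_ne_nil v [])
    rw [List.append_assoc, List.singleton_append] at this
    exact this
  · exact List.nodup_append.mpr ⟨(List.nodup_append.mp hpn).1, (List.nodup_append.mp hqn).2.1,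
      fun x hx y hy hxy => hdisj x hx (hxy ▸ hy)⟩

theorem mem_spNbrs_of_isShortestDiPath {c f x : V} {l : List V}
    (hp : IsShortestDiPath A w c f (c :: x :: l)) : x ∈ spNbrs A w c f :=
  ⟨(List.isChain_cons_cons.mp hp.1.2.2.1).1, _, hp, by simp⟩

theorem pathWeight_lt_of_spNbrs_inter_eq_empty {c f₁ f₂ v : V} {s r e g : List V}
    (hdisj : spNbrs A w c f₁ ∩ spNbrs A w c f₂ = ∅)
    (hp₁ : IsShortestDiPath A w c f₁ (c :: (s ++ v :: r)))
    (hp₂ : IsShortestDiPath A w c f₂ (c :: (e ++ v :: g))) (hs : ∀ x ∈ s, x ∉ e ++ v :: g) :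
    pathWeight w (c :: e ++ [v]) < pathWeight w (c :: s ++ [v]) := by
  by_contra! hle
  have hq : IsShortestDiPath A w c f₂ (c :: (s ++ v :: g)) := by
    refine ⟨IsDiPath.splice (p := c :: s) (q := c :: e) hp₁.1 hp₂.1 ?_, fun q hq => ?_⟩
    · rintro x (_ | ⟨_, hx⟩)
      · exact fun hc => (List.nodup_cons.mp hp₂.1.2.2.2).1 (List.mem_append_right e hc)
      · exact fun hx' => hs x hx (List.mem_append_right e hx')
    · calc pathWeight w (c :: (s ++ v :: g))
          = pathWeight w (c :: s ++ [v]) + pathWeight w (v :: g) :=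
            pathWeight_append_cons w (c :: s) v g
        _ ≤ pathWeight w (c :: e ++ [v]) + pathWeight w (v :: g) := by gcongr
        _ = pathWeight w (c :: (e ++ v :: g)) := (pathWeight_append_cons w (c :: e) v g).symm
        _ ≤ pathWeight w q := hp₂.2 q hq
  obtain ⟨x, l₁, l₂, h₁, h₂⟩ : ∃ x l₁ l₂, s ++ v :: r = x :: l₁ ∧ s ++ v :: g = x :: l₂ := by
    cases s <;> simp
  rw [h₁] at hp₁
  rw [h₂] at hq
  exact (hdisj ▸ ⟨mem_spNbrs_of_isShortestDiPath hp₁, mem_spNbrs_of_isShortestDiPath hq⟩ :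
    x ∈ (∅ : Set V))

theorem spNbrs_inter_eq_empty_of_coversSetwise (hirr : ∀ v, ¬ A v v) {c f₁ f₂ : V}
    (hcov : CoversSetwise A w c f₁ f₂) : spNbrs A w c f₁ ∩ spNbrs A w c f₂ = ∅ :=
  Set.eq_empty_of_forall_notMem fun x ⟨⟨hcx, p₁, hp₁, hx₁⟩, ⟨_, p₂, hp₂, hx₂⟩⟩ =>
    hirr c (hcov p₁ p₂ hp₁ hp₂ x hx₁ hx₂ ▸ hcx)

theorem coversSetwise_of_spNbrs_inter_eq_empty (hw : ∀ x y, A x y → 0 ≤ w x y) {c f₁ f₂ : V}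
    (hdisj : spNbrs A w c f₁ ∩ spNbrs A w c f₂ = ∅) : CoversSetwise A w c f₁ f₂ := by
  intro p₁ p₂ hp₁ hp₂ v₀ hv₀₁ hv₀₂
  by_contra hv₀c
  obtain ⟨t₁, rfl, -⟩ := hp₁.1.eq_cons
  obtain ⟨t₂, rfl, -⟩ := hp₂.1.eq_cons
  have hv₀t₁ := (List.mem_cons.mp hv₀₁).resolve_left hv₀c
  have hv₀t₂ := (List.mem_cons.mp hv₀₂).resolve_left hv₀c
  obtain ⟨s₁, v, r₁, rfl, hvt₂, hs₁⟩ :=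
    List.exists_eq_append_cons_of_exists_mem (P := (· ∈ t₂)) ⟨v₀, hv₀t₁, hv₀t₂⟩
  obtain ⟨s₂, u, r₂, rfl, hut₁, hs₂⟩ :=
    List.exists_eq_append_cons_of_exists_mem (P := (· ∈ s₁ ++ v :: r₁)) ⟨v₀, hv₀t₂, hv₀t₁⟩
  obtain ⟨m₁, g₁, hm₁⟩ := List.append_of_mem
    ((List.mem_append.mp hut₁).resolve_left fun hu => hs₁ u hu (by simp))
  obtain ⟨m₂, g₂, hm₂⟩ := List.append_of_mem
    ((List.mem_append.mp hvt₂).resolve_left fun hv => hs₂ v hv (by simp))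
  have hp₁' : IsShortestDiPath A w c f₁ (c :: ((s₁ ++ m₁) ++ u :: g₁)) := by
    rwa [List.append_assoc, ← hm₁]
  have hp₂' : IsShortestDiPath A w c f₂ (c :: ((s₂ ++ m₂) ++ v :: g₂)) := by
    rwa [List.append_assoc, ← hm₂]
  have hv := pathWeight_lt_of_spNbrs_inter_eq_empty hdisj hp₁ hp₂'
    (by rwa [List.append_assoc, ← hm₂])
  have hu := pathWeight_lt_of_spNbrs_inter_eq_empty (Set.inter_comm _ _ ▸ hdisj) hp₂ hp₁'
    (by rwa [List.append_assoc, ← hm₁])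
  have hvu := pathWeight_concat_le_of_cons_eq_append (a := c :: s₁) hw hp₁.1.2.2.1 hm₁
  have huv := pathWeight_concat_le_of_cons_eq_append (a := c :: s₂) hw hp₂.1.2.2.1 hm₂
  simp only [List.cons_append, List.append_assoc] at hv hu hvu huv
  linarith

end Paths

theorem coversSetwise_iff_spNbrs_disjoint_general
    {V : Type*} (A : V → V → Prop) (w : V → V → ℝ)
    (hw : ∀ x y, A x y → 0 ≤ w x y) (hirr : ∀ v, ¬ A v v)
    (c f₁ f₂ : V) :
    CoversSetwise A w c f₁ f₂ ↔ spNbrs A w c f₁ ∩ spNbrs A w c f₂ = ∅ :=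
  ⟨spNbrs_inter_eq_empty_of_coversSetwise hirr, coversSetwise_of_spNbrs_inter_eq_empty hw⟩

/-- In a loopless digraph with nonnegative arc weights, a pair
`{f₁,f₂}` of facilities with `c ∉ {f₁,f₂}` covers the customer `c` in a
setwise-disjoint fashion iff `N(c,f₁) ∩ N(c,f₂) = ∅`. -/
theorem coversSetwise_iff_spNbrs_disjoint
    {V : Type*} (A : V → V → Prop) (w : V → V → ℝ)
    (hw : ∀ x y, A x y → 0 ≤ w x y) (hirr : ∀ v, ¬ A v v)
    (c f₁ f₂ : V) (hc₁ : c ≠ f₁) (hc₂ : c ≠ f₂) (h₁₂ : f₁ ≠ f₂) :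
    CoversSetwise A w c f₁ f₂ ↔ spNbrs A w c f₁ ∩ spNbrs A w c f₂ = ∅ :=
  coversSetwise_iff_spNbrs_disjoint_general A w hw hirr c f₁ f₂
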